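/- Let d = 2, s ∈ (0,1), Ω = {(x,y) ∈ ℝ² : 0 < x,y < 1 and x < 2y < 3x}, and μ = δ_{e₁} + δ_{e₂} where e₁ = (1,0) and e₂ = (0,1). Define u : ℝ² → ℝ by u(x,y) = (xy)^{-1} for (x,y) ∈ Ω and u = 0 otherwise. Then u ∉ L¹(Ω), but ∫_{ℝ²} |u(x,y)| ν*(x,y) d(x,y) < ∞, i.e., u ∈ L¹(ℝ², ν*(x)dx). -/

import Mathlib

/-!
On `Ω` we have `x / 2 < y < 3x / 2`, so `Ω` contains the sector `{0 < x < 2/3, x/2 < y < x}`,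
where `(xy)⁻¹ ≥ x⁻²` on a vertical slice of length `x / 2`: the slices contribute `(2x)⁻¹`,
which is not integrable at `0`.

For the weighted bound, the weight `(1 + |r|)^(-1-2s)` is at most `1`, so `ν⋆(p)` is at most
the total length of the two chords of `Ω` through `p` in the directions `e₁` and `e₂`. For
`p = (x, y) ∈ Ω` these are at most `4y/3` and `x`, hence `|u| ν⋆ ≤ 4 / x` on `Ω`; and `x⁻¹` is
integrable over a sector `{0 < x < 1, ax < y < bx}` because its slices have length `(b - a) x`.
-/

open MeasureTheory Metric Set Filter Topology

noncomputable section

/-- The truncated stable operator `A_s^κ`. -/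
def AsTrunc {d : ℕ} (s : ℝ) (μ : Measure (sphere (0 : EuclideanSpace ℝ (Fin d)) 1))
    (u : EuclideanSpace ℝ (Fin d) → ℝ) (κ : ℝ) (x : EuclideanSpace ℝ (Fin d)) : ℝ :=
  ∫ r in {r : ℝ | κ ≤ |r|},
    ∫ θ : sphere (0 : EuclideanSpace ℝ (Fin d)) 1,
      (u x - u (x + r • (θ : EuclideanSpace ℝ (Fin d)))) * |r| ^ (-(1 + 2 * s)) ∂μ

/-- The stable operator `A_s` as a principal value
`A_s u (x) = lim_{κ → 0+} ∫_{|r| ≥ κ} ∫_{S^{d-1}} (u x - u (x + rθ)) |r|^{-1-2s} μ(dθ) dr`. -/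
def As {d : ℕ} (s : ℝ) (μ : Measure (sphere (0 : EuclideanSpace ℝ (Fin d)) 1))
    (u : EuclideanSpace ℝ (Fin d) → ℝ) (x : EuclideanSpace ℝ (Fin d)) : ℝ :=
  limUnder (𝓝[>] (0 : ℝ)) (fun κ => AsTrunc s μ u κ x)

/-- The tail weight `ν⋆(x) = ∫_ℝ ∫_{S^{d-1}} 1_Ω(x + rθ) (1+|r|)^{-1-2s} μ(dθ) dr`. -/
def nuStar {d : ℕ} (s : ℝ) (μ : Measure (sphere (0 : EuclideanSpace ℝ (Fin d)) 1))
    (Ω : Set (EuclideanSpace ℝ (Fin d))) (x : EuclideanSpace ℝ (Fin d)) : ℝ :=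
  ∫ r : ℝ, ∫ θ : sphere (0 : EuclideanSpace ℝ (Fin d)) 1,
    Ω.indicator (fun _ => (1 : ℝ)) (x + r • (θ : EuclideanSpace ℝ (Fin d))) *
      (1 + |r|) ^ (-(1 + 2 * s)) ∂μ

/-- The domain `Ω = {(x,y) : 0 < x,y < 1, x < 2y < 3x}` of Example A.2. -/
def exOmega : Set (EuclideanSpace ℝ (Fin 2)) :=
  {p | 0 < p 0 ∧ p 0 < 1 ∧ 0 < p 1 ∧ p 1 < 1 ∧ p 0 < 2 * p 1 ∧ 2 * p 1 < 3 * p 0}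

/-- The first standard basis vector as a point of the unit sphere `S¹ ⊂ ℝ²`. -/
def e₁ : sphere (0 : EuclideanSpace ℝ (Fin 2)) 1 :=
  ⟨EuclideanSpace.single (0 : Fin 2) (1 : ℝ), by
    simp [mem_sphere_iff_norm, EuclideanSpace.norm_single]⟩

/-- The second standard basis vector as a point of the unit sphere `S¹ ⊂ ℝ²`. -/
def e₂ : sphere (0 : EuclideanSpace ℝ (Fin 2)) 1 :=
  ⟨EuclideanSpace.single (1 : Fin 2) (1 : ℝ), by
    simp [mem_sphere_iff_norm, EuclideanSpace.norm_single]⟩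

open scoped ENNReal

def sector (I : Set ℝ) (a b : ℝ) : Set (ℝ × ℝ) :=
  {z | z.1 ∈ I ∧ z.2 ∈ Ioo (a * z.1) (b * z.1)}

theorem measurableSet_sector {I : Set ℝ} (hI : MeasurableSet I) (a b : ℝ) :
    MeasurableSet (sector I a b) :=
  (measurable_fst hI).inter <|
    (measurableSet_lt (measurable_fst.const_mul a) measurable_snd).inter
      (measurableSet_lt measurable_snd (measurable_fst.const_mul b))

theorem lintegral_sector {I : Set ℝ} (hI : MeasurableSet I) (a b : ℝ) {g : ℝ → ℝ≥0∞}
    (hg : Measurable g) :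
    ∫⁻ z in sector I a b, g z.1 = ∫⁻ x in I, g x * ENNReal.ofReal ((b - a) * x) := by
  have hsection (x : ℝ) : ∫⁻ y, (sector I a b).indicator (fun z => g z.1) (x, y) =
      I.indicator (fun x => g x * ENNReal.ofReal ((b - a) * x)) x := by
    by_cases hx : x ∈ I
    · have hslice (y : ℝ) : (sector I a b).indicator (fun z => g z.1) (x, y) =
          (Ioo (a * x) (b * x)).indicator (fun _ => g x) y := by
        simp [sector, indicator, hx]
      rw [lintegral_congr hslice, lintegral_indicator_const measurableSet_Ioo, Real.volume_Ioo,
        ← sub_mul, indicator_of_mem hx]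
    · simp [sector, indicator, hx]
  have hmeas : Measurable ((sector I a b).indicator fun z : ℝ × ℝ => g z.1) :=
    (hg.comp measurable_fst).indicator (measurableSet_sector hI a b)
  rw [← lintegral_indicator (measurableSet_sector hI a b), Measure.volume_eq_prod,
    lintegral_prod _ hmeas.aemeasurable]
  simp only [hsection, lintegral_indicator hI]

theorem integrableOn_sector_iff {I : Set ℝ} (hI : MeasurableSet I) (hI₀ : I ⊆ Ici 0)
    {a b : ℝ} (hab : a ≤ b) {g : ℝ → ℝ} (hg : Measurable g) :
    IntegrableOn (fun z => g z.1) (sector I a b) ↔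
      IntegrableOn (fun x => (b - a) * x * g x) I := by
  have hg₁ :
      AEStronglyMeasurable (fun z : ℝ × ℝ => g z.1) (volume.restrict (sector I a b)) :=
    (hg.comp measurable_fst).aestronglyMeasurable
  have hg₂ : AEStronglyMeasurable (fun x => (b - a) * x * g x) (volume.restrict I) :=
    ((measurable_id.const_mul _).mul hg).aestronglyMeasurable
  simp only [IntegrableOn, Integrable, hg₁, hg₂, true_and, HasFiniteIntegral]
  rw [lintegral_sector hI a b hg.enorm, setLIntegral_congr_fun hI fun x hx => ?_]
  rw [enorm_mul, Real.enorm_of_nonneg (mul_nonneg (sub_nonneg.2 hab) (hI₀ hx)), mul_comm]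

theorem not_integrableOn_inv_mul_sector {a b c : ℝ} (ha : 0 < a) (hab : a < b) (hc : 0 < c) :
    ¬ IntegrableOn (fun z : ℝ × ℝ => (z.1 * z.2)⁻¹) (sector (Ioo 0 c) a b) := by
  intro h
  have hb : 0 < b := ha.trans hab
  have hlower : IntegrableOn (fun z : ℝ × ℝ => (b * z.1 ^ 2)⁻¹) (sector (Ioo 0 c) a b) := by
    refine h.mono' (by fun_prop) (ae_restrict_of_forall_mem
      (measurableSet_sector measurableSet_Ioo a b) fun z ⟨hx, hy⟩ => ?_)
    have hx₀ : 0 < z.1 := hx.1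
    have hxy : z.1 * z.2 ≤ b * z.1 ^ 2 := by nlinarith [hy.2]
    rw [Real.norm_of_nonneg (by positivity)]
    exact inv_anti₀ (mul_pos hx₀ (by nlinarith [hy.1])) hxy
  replace hlower := (integrableOn_sector_iff measurableSet_Ioo
    (Ioo_subset_Ioi_self.trans Ioi_subset_Ici_self) hab.le
    (g := fun x => (b * x ^ 2)⁻¹) (by fun_prop)).1 hlower
  have hinv : IntegrableOn (fun x : ℝ => x⁻¹) (Ioo 0 c) := by
    refine IntegrableOn.congr_fun (hlower.const_mul (b / (b - a))) (fun x hx => ?_)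
      measurableSet_Ioo
    have : x ≠ 0 := hx.1.ne'
    have : b - a ≠ 0 := (sub_pos.2 hab).ne'
    field_simp
  have := (intervalIntegrable_iff_integrableOn_Ioo_of_le hc.le).2 hinv
  simp [hc.ne] at this

theorem integrableOn_inv_fst_sector (c : ℝ) {a b : ℝ} (hab : a ≤ b) :
    IntegrableOn (fun z : ℝ × ℝ => z.1⁻¹) (sector (Ioo 0 c) a b) := by
  refine (integrableOn_sector_iff measurableSet_Ioo (Ioo_subset_Ioi_self.trans Ioi_subset_Ici_self)
    hab (g := fun x => x⁻¹) measurable_inv).2 ?_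
  refine (integrableOn_const (C := b - a) measure_Ioo_lt_top.ne).congr_fun (fun x hx => ?_)
    measurableSet_Ioo
  rw [mul_assoc, mul_inv_cancel₀ hx.1.ne', mul_one]

section nuStar

variable {d : ℕ} {s : ℝ} {Ω : Set (EuclideanSpace ℝ (Fin d))}

theorem nuStar_nonneg (μ : Measure (sphere (0 : EuclideanSpace ℝ (Fin d)) 1))
    (x : EuclideanSpace ℝ (Fin d)) : 0 ≤ nuStar s μ Ω x :=
  integral_nonneg fun _ => integral_nonneg fun _ =>
    mul_nonneg (indicator_nonneg (fun _ _ => zero_le_one) _) (by positivity)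

theorem measurable_nuStar (μ : Measure (sphere (0 : EuclideanSpace ℝ (Fin d)) 1)) [SFinite μ]
    (hΩ : MeasurableSet Ω) : Measurable (nuStar s μ Ω) := by
  have hF : Measurable fun q : (EuclideanSpace ℝ (Fin d) × ℝ) ×
      sphere (0 : EuclideanSpace ℝ (Fin d)) 1 =>
      Ω.indicator (fun _ => (1 : ℝ)) (q.1.1 + q.1.2 • (q.2 : EuclideanSpace ℝ (Fin d))) *
        (1 + |q.1.2|) ^ (-(1 + 2 * s)) := by
    refine Measurable.mul ((measurable_const.indicator hΩ).comp ?_) ?_ <;> fun_prop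
  exact (hF.stronglyMeasurable.integral_prod_right' (ν := μ)).integral_prod_right'.measurable

theorem nuStar_dirac_add_dirac (θ₁ θ₂ : sphere (0 : EuclideanSpace ℝ (Fin d)) 1)
    (x : EuclideanSpace ℝ (Fin d)) :
    nuStar s (Measure.dirac θ₁ + Measure.dirac θ₂) Ω x =
      ∫ r : ℝ, (Ω.indicator 1 (x + r • (θ₁ : EuclideanSpace ℝ (Fin d))) +
        Ω.indicator 1 (x + r • (θ₂ : EuclideanSpace ℝ (Fin d)))) *
          (1 + |r|) ^ (-(1 + 2 * s)) := by
  refine integral_congr_ae (Eventually.of_forall fun r => ?_)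
  dsimp only
  rw [integral_add_measure (integrable_dirac enorm_lt_top) (integrable_dirac enorm_lt_top),
    integral_dirac, integral_dirac, add_mul]
  rfl

theorem nuStar_dirac_add_dirac_le (hs : 0 ≤ 1 + 2 * s)
    {θ₁ θ₂ : sphere (0 : EuclideanSpace ℝ (Fin d)) 1} {x : EuclideanSpace ℝ (Fin d)}
    {a₁ b₁ a₂ b₂ : ℝ}
    (h₁ : ∀ r : ℝ, x + r • (θ₁ : EuclideanSpace ℝ (Fin d)) ∈ Ω → r ∈ Ioo a₁ b₁)
    (h₂ : ∀ r : ℝ, x + r • (θ₂ : EuclideanSpace ℝ (Fin d)) ∈ Ω → r ∈ Ioo a₂ b₂) :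
    nuStar s (Measure.dirac θ₁ + Measure.dirac θ₂) Ω x ≤
      volume.real (Ioo a₁ b₁) + volume.real (Ioo a₂ b₂) := by
  have hline {θ : sphere (0 : EuclideanSpace ℝ (Fin d)) 1} {a b : ℝ}
      (h : ∀ r : ℝ, x + r • (θ : EuclideanSpace ℝ (Fin d)) ∈ Ω → r ∈ Ioo a b)
      (r : ℝ) :
      Ω.indicator 1 (x + r • (θ : EuclideanSpace ℝ (Fin d))) ≤ (Ioo a b).indicator 1 r :=
    indicator_apply_le' (fun hr => (indicator_of_mem (h r hr) (1 : ℝ → ℝ)).ge) fun _ =>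
      indicator_nonneg (fun _ _ => zero_le_one' ℝ) _
  have hweight (r : ℝ) : (1 + |r|) ^ (-(1 + 2 * s)) ≤ (1 : ℝ) :=
    Real.rpow_le_one_of_one_le_of_nonpos (by linarith [abs_nonneg r]) (by linarith)
  have hIoo (a b : ℝ) : Integrable ((Ioo a b).indicator (1 : ℝ → ℝ)) :=
    (integrable_indicator_iff measurableSet_Ioo).2 (integrableOn_const measure_Ioo_lt_top.ne)
  rw [nuStar_dirac_add_dirac, ← integral_indicator_one measurableSet_Ioo,
    ← integral_indicator_one measurableSet_Ioo, ← integral_add]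
  · refine integral_mono_of_nonneg (Eventually.of_forall fun r => ?_) ?_
      (Eventually.of_forall fun r => ?_)
    · exact mul_nonneg (add_nonneg (indicator_nonneg (fun _ _ => zero_le_one' ℝ) _)
        (indicator_nonneg (fun _ _ => zero_le_one' ℝ) _)) (by positivity)
    · exact (hIoo a₁ b₁).add (hIoo a₂ b₂)
    · calc _ ≤ Ω.indicator 1 (x + r • (θ₁ : EuclideanSpace ℝ (Fin d))) +
            Ω.indicator 1 (x + r • (θ₂ : EuclideanSpace ℝ (Fin d))) :=
            mul_le_of_le_one_right (add_nonneg (indicator_nonneg (fun _ _ => zero_le_one' ℝ) _)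
              (indicator_nonneg (fun _ _ => zero_le_one' ℝ) _)) (hweight r)
        _ ≤ _ := add_le_add (hline h₁ r) (hline h₂ r)
  all_goals exact hIoo _ _

end nuStar

def euclideanEquivProd : EuclideanSpace ℝ (Fin 2) ≃ᵐ ℝ × ℝ :=
  (MeasurableEquiv.toLp 2 (Fin 2 → ℝ)).symm.trans MeasurableEquiv.finTwoArrow

theorem measurePreserving_euclideanEquivProd : MeasurePreserving euclideanEquivProd :=
  (EuclideanSpace.volume_preserving_symm_measurableEquiv_toLp (Fin 2)).trans
    (volume_preserving_finTwoArrow ℝ)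

theorem integrableOn_comp_euclideanEquivProd_preimage {f : ℝ × ℝ → ℝ} {S : Set (ℝ × ℝ)} :
    IntegrableOn (f ∘ euclideanEquivProd) (euclideanEquivProd ⁻¹' S) ↔ IntegrableOn f S :=
  measurePreserving_euclideanEquivProd.integrableOn_comp_preimage
    euclideanEquivProd.measurableEmbedding

theorem mem_euclideanEquivProd_preimage_sector {I : Set ℝ} {a b : ℝ}
    {p : EuclideanSpace ℝ (Fin 2)} :
    p ∈ euclideanEquivProd ⁻¹' sector I a b ↔ p 0 ∈ I ∧ p 1 ∈ Ioo (a * p 0) (b * p 0) :=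
  Iff.rfl

theorem measurableSet_exOmega : MeasurableSet exOmega := by
  unfold exOmega; measurability

theorem preimage_sector_subset_exOmega :
    euclideanEquivProd ⁻¹' sector (Ioo 0 (2 / 3)) (1 / 2) 1 ⊆ exOmega :=
  fun _ hp => by
    obtain ⟨⟨hx₀, hx₁⟩, hy₀, hy₁⟩ := mem_euclideanEquivProd_preimage_sector.1 hp
    refine ⟨hx₀, ?_, ?_, ?_, ?_, ?_⟩ <;> linarith

theorem exOmega_subset_preimage_sector :
    exOmega ⊆ euclideanEquivProd ⁻¹' sector (Ioo 0 1) (1 / 2) (3 / 2) :=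
  fun _ ⟨hx₀, hx₁, _, _, hxy, hyx⟩ =>
    mem_euclideanEquivProd_preimage_sector.2 ⟨⟨hx₀, hx₁⟩, by linarith, by linarith⟩

theorem not_integrableOn_inv_mul_exOmega :
    ¬ IntegrableOn (fun p : EuclideanSpace ℝ (Fin 2) => (p 0 * p 1)⁻¹) exOmega := fun h =>
  not_integrableOn_inv_mul_sector (by norm_num) (by norm_num) (by norm_num)
    (integrableOn_comp_euclideanEquivProd_preimage.1
      (h.mono_set preimage_sector_subset_exOmega))

theorem integrableOn_inv_fst_exOmega :
    IntegrableOn (fun p : EuclideanSpace ℝ (Fin 2) => (p 0)⁻¹) exOmega :=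
  (integrableOn_comp_euclideanEquivProd_preimage.2
    (integrableOn_inv_fst_sector 1 (by norm_num))).mono_set exOmega_subset_preimage_sector

theorem nuStar_exOmega_le {s : ℝ} (hs : 0 ≤ 1 + 2 * s) {p : EuclideanSpace ℝ (Fin 2)}
    (hp : p ∈ exOmega) :
    nuStar s (Measure.dirac e₁ + Measure.dirac e₂) exOmega p ≤ 4 / 3 * p 1 + p 0 := by
  obtain ⟨-, -, -, -, hxy, hyx⟩ := hp
  calc nuStar s (Measure.dirac e₁ + Measure.dirac e₂) exOmega p
      ≤ volume.real (Ioo (2 * p 1 / 3 - p 0) (2 * p 1 - p 0)) +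
          volume.real (Ioo (p 0 / 2 - p 1) (3 * p 0 / 2 - p 1)) := by
        refine nuStar_dirac_add_dirac_le hs (fun r hr => ?_) fun r hr => ?_
        all_goals
          obtain ⟨-, -, -, -, h₁, h₂⟩ := hr
          simp [e₁, e₂] at h₁ h₂
          exact ⟨by linarith, by linarith⟩
    _ = 4 / 3 * p 1 + p 0 := by
        rw [Real.volume_real_Ioo_of_le (by linarith), Real.volume_real_Ioo_of_le (by linarith)]
        ring

theorem abs_indicator_mul_nuStar_exOmega_le {s : ℝ} (hs : 0 ≤ 1 + 2 * s)
    (p : EuclideanSpace ℝ (Fin 2)) :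
    |exOmega.indicator (fun p => (p 0 * p 1)⁻¹) p| *
        nuStar s (Measure.dirac e₁ + Measure.dirac e₂) exOmega p ≤
      exOmega.indicator (fun p => 4 * (p 0)⁻¹) p := by
  by_cases hp : p ∈ exOmega
  · have ⟨hx, _, hy, _, hxy, _⟩ := hp
    rw [indicator_of_mem hp, indicator_of_mem hp, abs_of_pos (by positivity),
      inv_mul_le_iff₀ (by positivity)]
    calc nuStar s (Measure.dirac e₁ + Measure.dirac e₂) exOmega p
        ≤ 4 / 3 * p 1 + p 0 := nuStar_exOmega_le hs hp
      _ ≤ 4 * p 1 := by linarith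
      _ = p 0 * p 1 * (4 * (p 0)⁻¹) := by field_simp
  · simp [indicator_of_notMem hp]

theorem stmt13_general (s : ℝ) (hs : 0 < s) :
    ¬ IntegrableOn (exOmega.indicator (fun p => (p 0 * p 1)⁻¹)) exOmega ∧
    Integrable (fun x => |exOmega.indicator (fun p => (p 0 * p 1)⁻¹) x| *
      nuStar s (Measure.dirac e₁ + Measure.dirac e₂) exOmega x) := by
  refine ⟨?_, ?_⟩
  · rw [integrableOn_indicator_iff measurableSet_exOmega, inter_self]
    exact not_integrableOn_inv_mul_exOmega
  · have hdom : Integrable (exOmega.indicator fun p => 4 * (p 0)⁻¹) :=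
      (integrable_indicator_iff measurableSet_exOmega).2 (integrableOn_inv_fst_exOmega.const_mul 4)
    refine hdom.mono' ?_ (Eventually.of_forall fun p => ?_)
    · exact ((Measurable.indicator (by fun_prop) measurableSet_exOmega).abs.mul
        (measurable_nuStar _ measurableSet_exOmega)).aestronglyMeasurable
    · rw [Real.norm_of_nonneg (mul_nonneg (abs_nonneg _) (nuStar_nonneg _ p))]
      exact abs_indicator_mul_nuStar_exOmega_le (by linarith) p

/-- **Example A.2**: with `d = 2`, `μ = δ_{e₁} + δ_{e₂}` (corresponding to the operator
`(-∂₁²)^s + (-∂₂²)^s`) and `u(x,y) = (xy)⁻¹` on `Ω`, `u = 0` elsewhere, the function `u`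
is not integrable on `Ω` but belongs to the tail space `L¹(ℝ², ν⋆(x)dx)`. -/
theorem stmt13 (s : ℝ) (hs : 0 < s) (hs1 : s < 1) :
    ¬ IntegrableOn (exOmega.indicator (fun p => (p 0 * p 1)⁻¹)) exOmega ∧
    Integrable (fun x => |exOmega.indicator (fun p => (p 0 * p 1)⁻¹) x| *
      nuStar s (Measure.dirac e₁ + Measure.dirac e₂) exOmega x) :=
  stmt13_general s hs

end
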